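/- Let |𝒳| be the maximum alphabet cardinality of X_1,…,X_n. For any subset γ ⊆ {1,…,n} with |γ| = m, the O-information satisfies C(X^γ) − (n−2) log|𝒳| ≤ Ω(X^n) ≤ C(X^γ) + (n−m−1) log|𝒳|. -/

import Mathlib

open Finset

noncomputable section

variable {Ω : Type*} [Fintype Ω]

/-- Probability of the event `A ⊆ Ω` under the probability mass function `p`. -/
def probOf (p : Ω → ℝ) (A : Finset Ω) : ℝ := ∑ ω ∈ A, p ω

/-- Shannon entropy (in bits, i.e. logarithm base 2) of the discrete random
variable `X` defined on the finite probability space with mass function `p`. -/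
def shEnt {S : Type*} [Fintype S] [DecidableEq S] (p : Ω → ℝ) (X : Ω → S) : ℝ :=
  -∑ s : S, probOf p (univ.filter fun ω => X ω = s) *
      Real.logb 2 (probOf p (univ.filter fun ω => X ω = s))

/-- Mutual information `I(X;Y)`. -/
def mutInfo {S T : Type*} [Fintype S] [DecidableEq S] [Fintype T] [DecidableEq T]
    (p : Ω → ℝ) (X : Ω → S) (Y : Ω → T) : ℝ :=
  shEnt p X + shEnt p Y - shEnt p (fun ω => (X ω, Y ω))

/-- Conditional mutual information `I(X;Y∣Z)`. -/
def condMutInfo {S T U : Type*} [Fintype S] [DecidableEq S] [Fintype T] [DecidableEq T]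
    [Fintype U] [DecidableEq U] (p : Ω → ℝ) (X : Ω → S) (Y : Ω → T) (Z : Ω → U) : ℝ :=
  shEnt p (fun ω => (X ω, Z ω)) + shEnt p (fun ω => (Y ω, Z ω))
    - shEnt p (fun ω => (X ω, Y ω, Z ω)) - shEnt p Z

variable {n : ℕ} {S : Fin n → Type*} [∀ i, Fintype (S i)] [∀ i, DecidableEq (S i)]

/-- The sub-vector `X^γ` of the tuple of random variables `X`. -/
def restrict (X : ∀ i, Ω → S i) (γ : Finset (Fin n)) : Ω → ∀ i : γ, S i.1 :=
  fun ω i => X i.1 ω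

/-- Joint Shannon entropy `H(X^γ)` of the sub-vector indexed by `γ`. -/
def subEnt (p : Ω → ℝ) (X : ∀ i, Ω → S i) (γ : Finset (Fin n)) : ℝ :=
  shEnt p (restrict X γ)

/-- Total correlation `C(X^γ)`: sum of marginal entropies minus joint entropy. -/
def totCorr (p : Ω → ℝ) (X : ∀ i, Ω → S i) (γ : Finset (Fin n)) : ℝ :=
  (∑ i ∈ γ, shEnt p (X i)) - subEnt p X γ

/-- Binding entropy `B(X^γ)`: joint entropy minus the sum of the residual
entropies `R_j = H(X_j ∣ X^γ_{-j})` (each conditional entropy being a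
difference of joint entropies). -/
def bindEnt (p : Ω → ℝ) (X : ∀ i, Ω → S i) (γ : Finset (Fin n)) : ℝ :=
  subEnt p X γ - ∑ i ∈ γ, (subEnt p X γ - subEnt p X (γ.erase i))

/-- The O-information `Ω(X^γ) = C(X^γ) - B(X^γ)`. -/
def oInfo (p : Ω → ℝ) (X : ∀ i, Ω → S i) (γ : Finset (Fin n)) : ℝ :=
  totCorr p X γ - bindEnt p X γ

/-!
Writing `H(A)` for the joint entropy of `X^A`, `H` is monotone and submodular, and
`Ω(X^γ) - C(X^{γ∖j}) = H(X_j) - H(γ) + ∑_{k ∈ γ∖j} R_k`. Han's inequality (submodularity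
telescoped along `γ∖j`) bounds the residual sum by `H(γ) - H(X_j)`, so `Ω(X^n) ≤ C(X^{[n]∖j})`;
keeping only the residual `R_k` of one `k ≠ j` and bounding `H([n]∖k)` by subadditivity gives
`Ω(X^n) ≥ C(X^{[n]∖j}) - ∑_{i ≠ j,k} H(X_i)`. Choosing `j ∉ γ`, it remains to compare
`C(X^{[n]∖j})` with `C(X^γ)`, which costs at most one marginal entropy `≤ log|𝒳|` per index
of `[n]∖(γ ∪ {j})`.
-/

open Function

theorem sum_mul_logb_le_sum_mul_logb_self {ι : Type*} [Fintype ι] {a b : ι → ℝ}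
    (ha : ∀ i, 0 ≤ a i) (hb : ∀ i, 0 ≤ b i) (hab : ∀ i, 0 < a i → 0 < b i)
    (hsum : ∑ i, b i ≤ ∑ i, a i) :
    ∑ i, a i * Real.logb 2 (b i) ≤ ∑ i, a i * Real.logb 2 (a i) := by
  have hterm : ∀ i, a i * Real.log (b i) - a i * Real.log (a i) ≤ b i - a i := by
    intro i
    rcases (ha i).eq_or_lt with h0 | h0
    · simp [← h0, hb i]
    · have hb0 := hab i h0
      calc a i * Real.log (b i) - a i * Real.log (a i) = a i * Real.log (b i / a i) := by
            rw [Real.log_div hb0.ne' h0.ne']; ring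
        _ ≤ a i * (b i / a i - 1) :=
            mul_le_mul_of_nonneg_left (Real.log_le_sub_one_of_pos (div_pos hb0 h0)) h0.le
        _ = b i - a i := by field_simp
  have hlog : ∑ i, a i * Real.log (b i) ≤ ∑ i, a i * Real.log (a i) := by
    have := sum_le_sum fun i (_ : i ∈ univ) => hterm i
    simp only [sum_sub_distrib] at this
    linarith
  simp only [Real.logb, mul_div_assoc', ← sum_div]
  exact div_le_div_of_nonneg_right hlog (Real.log_nonneg one_le_two)

section Entropy

variable {α β : Type*} [DecidableEq α] [DecidableEq β] {p : Ω → ℝ}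

def distrib (p : Ω → ℝ) (X : Ω → α) (a : α) : ℝ :=
  probOf p (univ.filter fun ω => X ω = a)

theorem distrib_nonneg (hp : ∀ ω, 0 ≤ p ω) (X : Ω → α) (a : α) : 0 ≤ distrib p X a :=
  sum_nonneg fun ω _ => hp ω

theorem distrib_le_distrib_comp (hp : ∀ ω, 0 ≤ p ω) (X : Ω → α) (e : α → β) (a : α) :
    distrib p X a ≤ distrib p (fun ω => e (X ω)) (e a) :=
  sum_le_sum_of_subset_of_nonneg (fun ω => by simpa using congrArg e) fun ω _ _ => hp ω

theorem distrib_comp_of_injective (X : Ω → α) {e : α → β} (he : Injective e) (a : α) :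
    distrib p (fun ω => e (X ω)) (e a) = distrib p X a := by
  simp only [distrib, he.eq_iff]

variable [Fintype α]

theorem shEnt_eq_neg_sum_distrib (X : Ω → α) :
    shEnt p X = -∑ a, distrib p X a * Real.logb 2 (distrib p X a) := rfl

theorem sum_distrib_mul (X : Ω → α) (g : α → ℝ) :
    ∑ a, distrib p X a * g a = ∑ ω, p ω * g (X ω) := by
  rw [← sum_fiberwise univ X fun ω => p ω * g (X ω)]
  refine sum_congr rfl fun a _ => ?_
  rw [distrib, probOf, sum_mul]
  exact sum_congr rfl fun ω hω => by rw [(mem_filter.1 hω).2]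

theorem sum_distrib (hp1 : ∑ ω, p ω = 1) (X : Ω → α) : ∑ a, distrib p X a = 1 := by
  simpa [hp1] using sum_distrib_mul (p := p) X fun _ => 1

theorem sum_filter_distrib (X : Ω → α) (e : α → β) (b : β) :
    ∑ a ∈ univ.filter (fun a => e a = b), distrib p X a = distrib p (fun ω => e (X ω)) b := by
  have := sum_distrib_mul (p := p) X fun a => if e a = b then 1 else 0
  simp only [mul_ite, mul_one, mul_zero, ← sum_filter] at this
  exact this

theorem shEnt_of_subsingleton [Subsingleton α] (hp1 : ∑ ω, p ω = 1) (X : Ω → α) :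
    shEnt p X = 0 := by
  have h1 : ∀ a, distrib p X a = 1 := fun a => by
    rw [distrib, probOf, filter_true_of_mem fun ω _ => Subsingleton.elim _ _]
    exact hp1
  simp [shEnt_eq_neg_sum_distrib, h1]

theorem shEnt_le_logb_of_card_le (hp : ∀ ω, 0 ≤ p ω) (hp1 : ∑ ω, p ω = 1) (X : Ω → α)
    {c : ℕ} (hc : Fintype.card α ≤ c) : shEnt p X ≤ Real.logb 2 c := by
  have : Nonempty Ω := by
    by_contra h
    simp [not_nonempty_iff.mp h] at hp1
  have : Nonempty α := this.map X
  have hcard : (0 : ℝ) < Fintype.card α := by exact_mod_cast Fintype.card_pos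
  have hgibbs := sum_mul_logb_le_sum_mul_logb_self (distrib_nonneg hp X)
    (b := fun _ => (Fintype.card α : ℝ)⁻¹) (fun _ => by positivity) (fun _ _ => by positivity)
    (by simp [sum_distrib hp1, hcard.ne'])
  rw [← sum_mul, sum_distrib hp1, one_mul, Real.logb_inv] at hgibbs
  have hmono : Real.logb 2 (Fintype.card α) ≤ Real.logb 2 c :=
    Real.logb_le_logb_of_le one_lt_two hcard (by exact_mod_cast hc)
  rw [shEnt_eq_neg_sum_distrib]
  linarith

variable [Fintype β]

theorem sum_distrib_comp_mul (X : Ω → α) (e : α → β) (g : β → ℝ) :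
    ∑ a, distrib p X a * g (e a) = ∑ b, distrib p (fun ω => e (X ω)) b * g b := by
  rw [sum_distrib_mul, sum_distrib_mul]

theorem shEnt_comp_le (hp : ∀ ω, 0 ≤ p ω) (X : Ω → α) (e : α → β) :
    shEnt p (fun ω => e (X ω)) ≤ shEnt p X := by
  rw [shEnt_eq_neg_sum_distrib, shEnt_eq_neg_sum_distrib, neg_le_neg_iff,
    ← sum_distrib_comp_mul X e fun b => Real.logb 2 (distrib p (fun ω => e (X ω)) b)]
  refine sum_le_sum fun a _ => ?_
  rcases (distrib_nonneg hp X a).eq_or_lt with h0 | h0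
  · simp [← h0]
  · exact mul_le_mul_of_nonneg_left
      (Real.logb_le_logb_of_le one_lt_two h0 (distrib_le_distrib_comp hp X e a)) h0.le

theorem shEnt_comp_of_injective (X : Ω → α) {e : α → β} (he : Injective e) :
    shEnt p (fun ω => e (X ω)) = shEnt p X := by
  rw [shEnt_eq_neg_sum_distrib, shEnt_eq_neg_sum_distrib,
    ← sum_distrib_comp_mul X e fun b => Real.logb 2 (distrib p (fun ω => e (X ω)) b)]
  simp only [distrib_comp_of_injective X he]

theorem shEnt_pair_add_shEnt_le {κ : Type*} [Fintype κ] [DecidableEq κ]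
    (hp : ∀ ω, 0 ≤ p ω) (hp1 : ∑ ω, p ω = 1) (X : Ω → α) (Y : Ω → β) (f : α → κ) (g : β → κ)
    (hfg : ∀ ω, f (X ω) = g (Y ω)) :
    shEnt p (fun ω => (X ω, Y ω)) + shEnt p (fun ω => f (X ω)) ≤ shEnt p X + shEnt p Y := by
  simp only [shEnt_eq_neg_sum_distrib]
  set a := distrib p (fun ω => (X ω, Y ω))
  set qX := distrib p X
  set qY := distrib p Y
  set qZ := distrib p (fun ω => f (X ω))
  have ha0 : ∀ x, 0 ≤ a x := distrib_nonneg hp _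
  have hX : ∀ x, a x ≤ qX x.1 := distrib_le_distrib_comp hp _ Prod.fst
  have hY : ∀ x, a x ≤ qY x.2 := distrib_le_distrib_comp hp _ Prod.snd
  have hZ : ∀ x, a x ≤ qZ (f x.1) := distrib_le_distrib_comp hp _ fun x : α × β => f x.1
  have hsupp : ∀ x, 0 < a x → g x.2 = f x.1 := by
    intro x hx
    obtain ⟨ω, hω⟩ := nonempty_of_sum_ne_zero hx.ne'
    rw [← (mem_filter.1 hω).2]
    exact (hfg ω).symm
  -- the law of `(X, Y)` if they were conditionally independent given `f ∘ X`
  let b : α × β → ℝ := fun x => if g x.2 = f x.1 then qX x.1 * qY x.2 / qZ (f x.1) else 0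
  have hb0 : ∀ x, 0 ≤ b x := fun x => by
    dsimp only [b]
    split_ifs
    · exact div_nonneg (mul_nonneg (distrib_nonneg hp _ _) (distrib_nonneg hp _ _))
        (distrib_nonneg hp _ _)
    · exact le_rfl
  have hab : ∀ x, 0 < a x → 0 < b x := fun x hx => by
    dsimp only [b]
    rw [if_pos (hsupp x hx)]
    exact div_pos (mul_pos (hx.trans_le (hX x)) (hx.trans_le (hY x))) (hx.trans_le (hZ x))
  have hgY : (fun ω => g (Y ω)) = fun ω => f (X ω) := funext fun ω => (hfg ω).symm
  have hfiber : ∀ s, ∑ t, b (s, t) ≤ qX s := fun s => by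
    have hqZ : ∑ t ∈ univ.filter (fun t => g t = f s), qY t = qZ (f s) := by
      rw [sum_filter_distrib, hgY]
    calc ∑ t, b (s, t) = qX s * (qZ (f s) / qZ (f s)) := by
          simp only [b, ← sum_filter, ← hqZ, mul_sum, sum_div, mul_div_assoc]
      _ ≤ qX s := mul_le_of_le_one_right (distrib_nonneg hp X s) (div_self_le_one _)
  have hsum : ∑ x, b x ≤ ∑ x, a x :=
    calc ∑ x, b x = ∑ s, ∑ t, b (s, t) := Fintype.sum_prod_type _
      _ ≤ ∑ s, qX s := sum_le_sum fun s _ => hfiber s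
      _ = ∑ x, a x := by rw [sum_distrib hp1, sum_distrib hp1]
  have hsplit : ∀ x, a x * Real.logb 2 (b x) = a x * Real.logb 2 (qX x.1)
      + a x * Real.logb 2 (qY x.2) - a x * Real.logb 2 (qZ (f x.1)) := fun x => by
    rcases (ha0 x).eq_or_lt with h0 | h0
    · simp [← h0]
    · dsimp only [b]
      rw [if_pos (hsupp x h0), Real.logb_div (mul_pos (h0.trans_le (hX x))
        (h0.trans_le (hY x))).ne' (h0.trans_le (hZ x)).ne',
        Real.logb_mul (h0.trans_le (hX x)).ne' (h0.trans_le (hY x)).ne']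
      ring
  have hgibbs := sum_mul_logb_le_sum_mul_logb_self ha0 hb0 hab hsum
  rw [sum_congr rfl fun x _ => hsplit x, sum_sub_distrib, sum_add_distrib,
    sum_distrib_comp_mul _ Prod.fst fun s => Real.logb 2 (qX s),
    sum_distrib_comp_mul _ Prod.snd fun t => Real.logb 2 (qY t),
    sum_distrib_comp_mul _ (fun x : α × β => f x.1) fun z => Real.logb 2 (qZ z)] at hgibbs
  linarith

end Entropy

section SetFunction

variable {ι : Type*} [DecidableEq ι] {f : Finset ι → ℝ}

theorem sum_sub_erase_le_sub_sdiff (hf : ∀ A B, f (A ∪ B) + f (A ∩ B) ≤ f A + f B)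
    (δ D : Finset ι) : ∑ k ∈ D, (f δ - f (δ.erase k)) ≤ f δ - f (δ \ D) := by
  induction D using Finset.induction_on with
  | empty => simp
  | insert a D ha ih =>
    have hunion : δ.erase a ∪ δ \ D = δ := by
      ext x
      simp only [mem_union, mem_erase, mem_sdiff]
      by_cases hx : x = a
      · subst hx; tauto
      · tauto
    have hinter : δ.erase a ∩ (δ \ D) = δ \ insert a D := by
      ext x
      simp only [mem_inter, mem_erase, mem_sdiff, mem_insert]
      tauto
    have := hf (δ.erase a) (δ \ D)
    rw [hunion, hinter] at this
    rw [sum_insert ha]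
    linarith

theorem apply_union_le_add_sum_singleton (hf : ∀ A B, f (A ∪ B) + f (A ∩ B) ≤ f A + f B)
    (hf0 : ∀ A, 0 ≤ f A) (A D : Finset ι) : f (A ∪ D) ≤ f A + ∑ i ∈ D, f {i} := by
  induction D using Finset.induction_on with
  | empty => simp
  | insert a D ha ih =>
    have := hf {a} (A ∪ D)
    have := hf0 ({a} ∩ (A ∪ D))
    rw [sum_insert ha, union_insert, insert_eq]
    linarith

end SetFunction

section JointEntropy

variable {p : Ω → ℝ} (X : ∀ i, Ω → S i)

theorem subEnt_mono (hp : ∀ ω, 0 ≤ p ω) {γ δ : Finset (Fin n)} (h : γ ⊆ δ) :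
    subEnt p X γ ≤ subEnt p X δ :=
  shEnt_comp_le hp (restrict X δ) fun v (i : γ) => v ⟨i, h i.2⟩

theorem subEnt_empty (hp1 : ∑ ω, p ω = 1) : subEnt p X ∅ = 0 :=
  shEnt_of_subsingleton hp1 _

theorem subEnt_nonneg (hp : ∀ ω, 0 ≤ p ω) (hp1 : ∑ ω, p ω = 1) (γ : Finset (Fin n)) :
    0 ≤ subEnt p X γ :=
  subEnt_empty X hp1 ▸ subEnt_mono X hp (empty_subset γ)

theorem subEnt_singleton (i : Fin n) : subEnt p X {i} = shEnt p (X i) :=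
  (shEnt_comp_of_injective (restrict X {i}) (e := fun v => v ⟨i, mem_singleton_self i⟩)
    fun v w h => funext fun ⟨j, hj⟩ => by obtain rfl := mem_singleton.1 hj; exact h).symm

theorem subEnt_union_add_inter_le (hp : ∀ ω, 0 ≤ p ω) (hp1 : ∑ ω, p ω = 1)
    (A B : Finset (Fin n)) :
    subEnt p X (A ∪ B) + subEnt p X (A ∩ B) ≤ subEnt p X A + subEnt p X B := by
  have hinj : Injective fun (v : ∀ i : (A ∪ B : Finset (Fin n)), S i.1) =>
      ((fun i : A => v ⟨i, mem_union_left B i.2⟩), fun i : B => v ⟨i, mem_union_right A i.2⟩) := by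
    intro v w h
    funext ⟨i, hi⟩
    rcases mem_union.1 hi with hA | hB
    · exact congrFun (congrArg Prod.fst h) ⟨i, hA⟩
    · exact congrFun (congrArg Prod.snd h) ⟨i, hB⟩
  -- elaborated without the expected type: unifying against it makes Lean unfold `shEnt`
  have hpair : shEnt p (fun ω => (restrict X A ω, restrict X B ω)) = subEnt p X (A ∪ B) :=
    (shEnt_comp_of_injective (restrict X (A ∪ B)) hinj :)
  rw [← hpair]
  exact shEnt_pair_add_shEnt_le hp hp1 (restrict X A) (restrict X B)
    (fun v (i : (A ∩ B : Finset (Fin n))) => v ⟨i, mem_of_mem_inter_left i.2⟩)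
    (fun v i => v ⟨i, mem_of_mem_inter_right i.2⟩) fun _ => rfl

end JointEntropy

section OInformation

variable {p : Ω → ℝ} (X : ∀ i, Ω → S i)

theorem oInfo_sub_totCorr_erase {γ : Finset (Fin n)} {j : Fin n} (hj : j ∈ γ) :
    oInfo p X γ - totCorr p X (γ.erase j) = shEnt p (X j) - subEnt p X γ
      + ∑ k ∈ γ.erase j, (subEnt p X γ - subEnt p X (γ.erase k)) := by
  unfold oInfo totCorr bindEnt
  rw [← add_sum_erase γ (fun i => shEnt p (X i)) hj,
    ← add_sum_erase γ (fun k => subEnt p X γ - subEnt p X (γ.erase k)) hj]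
  ring

theorem oInfo_le_totCorr_erase (hp : ∀ ω, 0 ≤ p ω) (hp1 : ∑ ω, p ω = 1)
    {γ : Finset (Fin n)} {j : Fin n} (hj : j ∈ γ) :
    oInfo p X γ ≤ totCorr p X (γ.erase j) := by
  have hhan := sum_sub_erase_le_sub_sdiff (subEnt_union_add_inter_le X hp hp1) γ (γ.erase j)
  rw [sdiff_erase_self hj, subEnt_singleton] at hhan
  linarith [oInfo_sub_totCorr_erase (p := p) X hj]

theorem totCorr_erase_sub_sum_le_oInfo (hp : ∀ ω, 0 ≤ p ω) (hp1 : ∑ ω, p ω = 1)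
    {γ : Finset (Fin n)} {j k : Fin n} (hj : j ∈ γ) (hk : k ∈ γ) (hjk : j ≠ k) :
    totCorr p X (γ.erase j) - ∑ i ∈ (γ.erase k).erase j, shEnt p (X i) ≤ oInfo p X γ := by
  have hres : subEnt p X γ - subEnt p X (γ.erase k)
      ≤ ∑ i ∈ γ.erase j, (subEnt p X γ - subEnt p X (γ.erase i)) :=
    single_le_sum (fun i _ => sub_nonneg.2 (subEnt_mono X hp (erase_subset i γ)))
      (mem_erase.2 ⟨hjk.symm, hk⟩)
  have hsub := apply_union_le_add_sum_singleton (subEnt_union_add_inter_le X hp hp1)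
    (subEnt_nonneg X hp hp1) {j} ((γ.erase k).erase j)
  rw [← insert_eq, insert_erase (mem_erase.2 ⟨hjk, hj⟩)] at hsub
  simp only [subEnt_singleton] at hsub
  linarith [oInfo_sub_totCorr_erase (p := p) X hj]

theorem totCorr_mono (hp : ∀ ω, 0 ≤ p ω) (hp1 : ∑ ω, p ω = 1) {γ δ : Finset (Fin n)}
    (h : γ ⊆ δ) : totCorr p X γ ≤ totCorr p X δ := by
  have hsub := apply_union_le_add_sum_singleton (subEnt_union_add_inter_le X hp hp1)
    (subEnt_nonneg X hp hp1) γ (δ \ γ)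
  rw [union_sdiff_of_subset h] at hsub
  simp only [subEnt_singleton] at hsub
  unfold totCorr
  rw [← sum_sdiff h]
  linarith

theorem totCorr_le_add_sum_sdiff (hp : ∀ ω, 0 ≤ p ω) {γ δ : Finset (Fin n)} (h : γ ⊆ δ) :
    totCorr p X δ ≤ totCorr p X γ + ∑ i ∈ δ \ γ, shEnt p (X i) := by
  unfold totCorr
  rw [← sum_sdiff h]
  linarith [subEnt_mono X hp h]

theorem sum_shEnt_le_card_mul_logb_max (hp : ∀ ω, 0 ≤ p ω) (hp1 : ∑ ω, p ω = 1)
    (D : Finset (Fin n)) :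
    ∑ i ∈ D, shEnt p (X i)
      ≤ D.card * Real.logb 2 ((univ.sup fun i => Fintype.card (S i) : ℕ) : ℝ) := by
  rw [← nsmul_eq_mul]
  exact sum_le_card_nsmul _ _ _ fun i _ =>
    shEnt_le_logb_of_card_le hp hp1 (X i) (le_sup (f := fun i => Fintype.card (S i)) (mem_univ i))

end OInformation

/-- for any subset `γ ⊆ {1,…,n}` with `|γ| = m` (`m ≤ n-1`), the
O-information satisfies
`C(X^γ) - (n-2)·log|𝒳| ≤ Ω(X^n) ≤ C(X^γ) + (n-m-1)·log|𝒳|`, where `|𝒳|` is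
the maximum alphabet cardinality (logarithm base 2). -/
theorem oInfo_bounds_from_subset_totCorr
    (p : Ω → ℝ) (hp : ∀ ω, 0 ≤ p ω) (hp1 : ∑ ω, p ω = 1)
    (X : ∀ i, Ω → S i) (m : ℕ) (hm1 : 1 ≤ m) (hm2 : m ≤ n - 1)
    (γ : Finset (Fin n)) (hγ : γ.card = m) :
    totCorr p X γ
        - ((n : ℝ) - 2) *
            Real.logb 2 ((Finset.univ.sup fun i => Fintype.card (S i) : ℕ) : ℝ)
      ≤ oInfo p X Finset.univ
    ∧ oInfo p X Finset.univ
      ≤ totCorr p X γ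
        + ((n : ℝ) - (m : ℝ) - 1) *
            Real.logb 2 ((Finset.univ.sup fun i => Fintype.card (S i) : ℕ) : ℝ) := by
  obtain ⟨j, -, hjγ⟩ := exists_mem_notMem_of_card_lt_card (s := γ) (t := univ)
    (by rw [hγ, card_univ, Fintype.card_fin]; omega)
  have : Nontrivial (Fin n) := Fin.nontrivial_iff_two_le.2 (by omega)
  obtain ⟨k, hkj⟩ := exists_ne j
  have hγj : γ ⊆ univ.erase j := fun i hi => mem_erase.2 ⟨ne_of_mem_of_not_mem hi hjγ, mem_univ i⟩
  have hcard_lower : (((univ.erase k).erase j).card : ℝ) = n - 2 := by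
    rw [card_erase_of_mem (mem_erase.2 ⟨hkj.symm, mem_univ j⟩), card_erase_of_mem (mem_univ k),
      card_univ, Fintype.card_fin, Nat.sub_sub, Nat.cast_sub (by omega : 1 + 1 ≤ n)]
    push_cast
    ring
  have hcard_upper : (((univ.erase j) \ γ).card : ℝ) = n - m - 1 := by
    rw [card_sdiff_of_subset hγj, card_erase_of_mem (mem_univ j), card_univ, Fintype.card_fin, hγ,
      Nat.sub_sub, Nat.cast_sub (by omega : 1 + m ≤ n)]
    push_cast
    ring
  have hlower := sum_shEnt_le_card_mul_logb_max X hp hp1 ((univ.erase k).erase j)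
  have hupper := sum_shEnt_le_card_mul_logb_max X hp hp1 ((univ.erase j) \ γ)
  rw [hcard_lower] at hlower
  rw [hcard_upper] at hupper
  constructor
  · linarith [totCorr_mono X hp hp1 hγj,
      totCorr_erase_sub_sum_le_oInfo X hp hp1 (mem_univ j) (mem_univ k) hkj.symm]
  · linarith [oInfo_le_totCorr_erase X hp hp1 (mem_univ j), totCorr_le_add_sum_sdiff X hp hγj]
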